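/- (A good rectangle.) Let μ be a Radon measure on ℝ^N, r_0 > 0, K compact with μ(K) > 0, and fix integers 0 ≤ N_0 < N and parameters L ≥ 8 and σ ∈ (0, 1/2). For x ∈ ℝ^N and r > 0 define the rectangle E(x,r) = x + [−L²r/2, L²r/2]^{N_0} × [−2r, 2r]^{N−N_0} and the core S(x,r) = x + [−L²r/2 + Lr/2, L²r/2 − Lr/2]^{N_0} × [−2σr, 2σr]^{N−N_0}. Then there exist x ∈ K and 0 < r ≤ r_0 such that μ(S(x,r)) ≥ σ^{N−N_0} · (1/3) · 2^{−2N−N_0−1} · (1 + 1/6)^{−1} · μ(E(x,r)) > 0. -/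

import Mathlib

/-!
The linear map `(y₁, y₂) ↦ (2 y₁ / L², y₂ / 2)` carries `E(x,r)` onto the sup-norm ball of radius
`r` about the image of `x`, and the preimage of the box of half-widths `(r/3, 2r/(3m))` about that
image lies in `S(x,r)` once `2 ≤ 3σm`. For the image measure it therefore suffices to find a point
`z` of the image of `K` and a scale `t` for which `μ(B(z,3t))` is bounded by a multiple of the
measure of the box of half-widths `(t, 2t/m)` about `z`; taking also `σm ≤ 1` gives the constant.

For `μ`-a.e. `x` the measure is doubling at arbitrarily small scales: otherwise `μ(B(x,r))` would
decay faster than the Haar measure of `B(x,r)`, whereas the Radon–Nikodym derivative of Haar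
measure with respect to `μ` is finite `μ`-a.e. With the Lebesgue density theorem this gives `x ∈ K`
and `t` with `μ(B(x,4t)) ≤ 2^{2N+1} μ(B(x,t))` and `μ(B(x,t)) ≤ 2 μ(K ∩ B(x,t))`. Of the
`2^{N₀} m^{N₁}` boxes of half-widths `(t/2, t/m)` covering `B(x,t)`, one carries at least its share
of `μ(K ∩ B(x,t))`; any `z ∈ K` in it has that box inside its own box of half-widths `(t, 2t/m)`,
and `B(z,3t) ⊆ B(x,4t)`.
-/

open MeasureTheory

/-- The rectangle `E(x,r)`, which is `L²` times larger in the first `N₀` coordinates. -/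
def Erect {N₀ N₁ : ℕ} (L : ℝ) (x : (Fin N₀ → ℝ) × (Fin N₁ → ℝ)) (r : ℝ) :
    Set ((Fin N₀ → ℝ) × (Fin N₁ → ℝ)) :=
  {y | (∀ i, |x.1 i - y.1 i| ≤ L ^ 2 * r / 2) ∧ (∀ i, |x.2 i - y.2 i| ≤ 2 * r)}

/-- The thin core `S(x,r)` of the rectangle `E(x,r)`. -/
def Score {N₀ N₁ : ℕ} (L σ : ℝ) (x : (Fin N₀ → ℝ) × (Fin N₁ → ℝ)) (r : ℝ) :
    Set ((Fin N₀ → ℝ) × (Fin N₁ → ℝ)) :=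
  {y | (∀ i, |x.1 i - y.1 i| ≤ L ^ 2 * r / 2 - L * r / 2) ∧ (∀ i, |x.2 i - y.2 i| ≤ 2 * σ * r)}

open Metric Set Filter Module
open scoped ENNReal NNReal Topology

theorem exists_mul_pow_lt_mul_pow {a b q D : ℝ} (ha : 0 < a) (hq : 0 < q) (hqD : q < D) :
    ∃ k : ℕ, b * q ^ k < a * D ^ k := by
  obtain ⟨k, hk⟩ := pow_unbounded_of_one_lt (b / a) ((one_lt_div hq).2 hqD)
  rw [div_pow, div_lt_div_iff₀ ha (by positivity)] at hk
  exact ⟨k, by linarith⟩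

theorem exists_measure_le_card_mul_measure_inter {α ι : Type*} [MeasurableSpace α] [Fintype ι]
    [Nonempty ι] (μ : Measure α) {A : Set α} {T : ι → Set α} (hA : A ⊆ ⋃ i, T i) :
    ∃ i, μ A ≤ Fintype.card ι * μ (A ∩ T i) := by
  obtain ⟨i, -, hi⟩ :=
    Finset.exists_max_image Finset.univ (fun i => μ (A ∩ T i)) Finset.univ_nonempty
  refine ⟨i, ?_⟩
  calc μ A = μ (⋃ j, A ∩ T j) := by rw [← inter_iUnion, inter_eq_left.2 hA]
    _ ≤ ∑ j, μ (A ∩ T j) := measure_iUnion_fintype_le μ _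
    _ ≤ ∑ _j : ι, μ (A ∩ T i) := Finset.sum_le_sum fun j _ => hi j (Finset.mem_univ j)
    _ = Fintype.card ι * μ (A ∩ T i) := by simp

theorem pow_mul_measure_closedBall_div_pow_le {X : Type*} [PseudoMetricSpace X]
    [MeasurableSpace X] (μ : Measure X) (x : X) {c a : ℝ} (hc : 1 ≤ c) (ha : 0 < a)
    {D : ℝ≥0∞} (h : ∀ s ∈ Ioc 0 a, D * μ (closedBall x s) ≤ μ (closedBall x (c * s))) (k : ℕ) :
    D ^ k * μ (closedBall x (a / c ^ k)) ≤ μ (closedBall x a) := by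
  induction k with
  | zero => simp
  | succ k ih =>
    have hck : c * (a / c ^ (k + 1)) = a / c ^ k := by
      rw [pow_succ]; field_simp [(zero_lt_one.trans_le hc).ne']
    calc D ^ (k + 1) * μ (closedBall x (a / c ^ (k + 1)))
        = D ^ k * (D * μ (closedBall x (a / c ^ (k + 1)))) := by ring
      _ ≤ D ^ k * μ (closedBall x (a / c ^ k)) := by
        rw [← hck]
        gcongr
        exact h _ ⟨by positivity, div_le_self ha.le (one_le_pow₀ hc)⟩
      _ ≤ μ (closedBall x a) := ih

section Doubling

variable {E : Type*} [NormedAddCommGroup E] [NormedSpace ℝ E] [FiniteDimensional ℝ E]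
  [MeasurableSpace E] [BorelSpace E]

theorem frequently_measure_closedBall_le_mul_of_eventually_addHaar_le (μ ν : Measure E)
    [IsLocallyFiniteMeasure μ] [ν.IsAddHaarMeasure] {x : E} {C : ℝ≥0∞} (hC : C ≠ ∞)
    (hνμ : ∀ᶠ r in 𝓝[>] 0, ν (closedBall x r) ≤ C * μ (closedBall x r))
    {c : ℝ} (hc : 1 < c) {D : ℝ≥0} (hD : c ^ finrank ℝ E < D) :
    ∃ᶠ r in 𝓝[>] 0, μ (closedBall x (c * r)) ≤ D * μ (closedBall x r) := by
  by_contra! hdoub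
  obtain ⟨ε, hε, hsub⟩ := mem_nhdsGT_iff_exists_Ioo_subset.1 (hdoub.and hνμ)
  set a := ε / 2
  have ha : 0 < a := half_pos hε
  set r : ℕ → ℝ := fun k => a / c ^ k
  have hr : ∀ k, r k ∈ Ioo 0 ε := fun k =>
    ⟨by positivity, (div_le_self ha.le (one_le_pow₀ hc.le)).trans_lt (half_lt_self hε)⟩
  have hdecay := pow_mul_measure_closedBall_div_pow_le μ x hc.le ha
    fun s hs => (hsub ⟨hs.1, hs.2.trans_lt (half_lt_self hε)⟩).1.le
  set q := ENNReal.ofReal (c ^ finrank ℝ E)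
  have hscale : ∀ k, ν (closedBall x a) = q ^ k * ν (closedBall x (r k)) := by
    intro k
    have : a = c ^ k * r k := by simp only [r]; field_simp
    rw [this, ν.addHaar_closedBall_mul x (by positivity) (hr k).1.le,
      ν.addHaar_closedBall_center x, ← ENNReal.ofReal_pow (by positivity), ← pow_mul, ← pow_mul,
      mul_comm k]
  have hbound : ∀ k, ν (closedBall x a) * D ^ k ≤ C * μ (closedBall x a) * q ^ k := fun k =>
    calc ν (closedBall x a) * D ^ k ≤ q ^ k * (C * μ (closedBall x (r k))) * D ^ k := by
          rw [hscale k]; gcongr; exact (hsub (hr k)).2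
      _ = C * q ^ k * (D ^ k * μ (closedBall x (r k))) := by ring
      _ ≤ C * μ (closedBall x a) * q ^ k := by
          rw [mul_right_comm C]; gcongr; exact hdecay k
  have hνa : 0 < (ν (closedBall x a)).toReal :=
    ENNReal.toReal_pos (measure_closedBall_pos ν x ha).ne' measure_closedBall_lt_top.ne
  obtain ⟨k, hk⟩ :=
    exists_mul_pow_lt_mul_pow (b := (C * μ (closedBall x a)).toReal) hνa (by positivity) hD
  have := ENNReal.toReal_mono (ENNReal.mul_ne_top (ENNReal.mul_ne_top hC
    measure_closedBall_lt_top.ne) (ENNReal.pow_ne_top ENNReal.ofReal_ne_top)) (hbound k)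
  have hq : 0 ≤ c ^ finrank ℝ E := by positivity
  simp only [ENNReal.toReal_mul, ENNReal.toReal_pow, ENNReal.toReal_ofReal hq,
    ENNReal.coe_toReal] at this hk
  linarith

theorem ae_frequently_measure_closedBall_le_mul (μ : Measure E) [IsLocallyFiniteMeasure μ]
    {c : ℝ} (hc : 1 < c) {D : ℝ≥0} (hD : c ^ finrank ℝ E < D) :
    ∀ᵐ x ∂μ, ∃ᶠ r in 𝓝[>] 0, μ (closedBall x (c * r)) ≤ D * μ (closedBall x r) := by
  set ν : Measure E := Measure.addHaar
  filter_upwards [Besicovitch.ae_tendsto_rnDeriv ν μ, Measure.rnDeriv_lt_top ν μ]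
    with x hlim hfin
  have hC : ν.rnDeriv μ x + 1 ≠ ∞ := by simp [hfin.ne]
  refine frequently_measure_closedBall_le_mul_of_eventually_addHaar_le μ ν hC ?_ hc hD
  filter_upwards [hlim.eventually (gt_mem_nhds (ENNReal.lt_add_right hfin.ne one_ne_zero))]
    with r hr
  exact (ENNReal.div_le_iff_le_mul (.inr hC) (.inr (by simp))).1 hr.le

theorem exists_mem_doubling_density_point (μ : Measure E) [IsLocallyFiniteMeasure μ]
    {K : Set E} (hK : MeasurableSet K) (hμK : 0 < μ K) {c : ℝ} (hc : 1 < c) {D : ℝ≥0}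
    (hD : c ^ finrank ℝ E < D) {r₀ : ℝ} (hr₀ : 0 < r₀) :
    ∃ x ∈ K, ∃ t ∈ Ioc 0 r₀, μ (closedBall x (c * t)) ≤ D * μ (closedBall x t) ∧
      0 < μ (closedBall x t) ∧ μ (closedBall x t) ≤ 2 * μ (K ∩ closedBall x t) := by
  have : (ae (μ.restrict K)).NeBot := ae_neBot.2 fun h => by
    simp [← Measure.restrict_apply_self μ K, h] at hμK
  obtain ⟨x, hxK, hdens, hdoub⟩ := ((ae_restrict_mem hK).and
    ((Besicovitch.ae_tendsto_measure_inter_div μ K).and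
      (ae_restrict_of_ae (ae_frequently_measure_closedBall_le_mul μ hc hD)))).exists
  have hev : ∀ᶠ t in 𝓝[>] 0,
      t ∈ Ioc 0 r₀ ∧ 2⁻¹ < μ (K ∩ closedBall x t) / μ (closedBall x t) :=
    Filter.Eventually.and (Ioc_mem_nhdsGT hr₀) (hdens.eventually (lt_mem_nhds (by norm_num)))
  obtain ⟨t, hdbl, ht, hhalf⟩ := (hdoub.and_eventually hev).exists
  have hpos : μ (closedBall x t) ≠ 0 := fun h => by
    simp [h, measure_mono_null inter_subset_right h] at hhalf
  refine ⟨x, hxK, t, ht, hdbl, pos_iff_ne_zero.2 hpos, ?_⟩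
  have := (ENNReal.lt_div_iff_mul_lt (.inl hpos) (.inl measure_closedBall_lt_top.ne)).1 hhalf
  calc μ (closedBall x t) = 2 * (2⁻¹ * μ (closedBall x t)) := by
        rw [← mul_assoc, ENNReal.mul_inv_cancel two_ne_zero ENNReal.ofNat_ne_top, one_mul]
    _ ≤ 2 * μ (K ∩ closedBall x t) := mul_le_mul_right this.le 2

end Doubling

theorem exists_fin_mem_closedBall {x y t : ℝ} (ht : 0 < t) (hy : y ∈ closedBall x t) {m : ℕ}
    (hm : 0 < m) : ∃ j : Fin m, y ∈ closedBall (x - t + (2 * j + 1) * t / m) (t / m) := by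
  set u := (y - x + t) * m / (2 * t)
  have hy' := abs_le.1 (mem_closedBall.1 hy)
  have hu0 : 0 ≤ u := div_nonneg (mul_nonneg (by linarith) m.cast_nonneg) (by positivity)
  have hm' : (0 : ℝ) < m := by exact_mod_cast hm
  have hum : u ≤ m := by rw [div_le_iff₀ (by positivity)]; nlinarith
  obtain ⟨j, hj, hj'⟩ : ∃ j : Fin m, (j : ℝ) ≤ u ∧ u ≤ j + 1 := by
    refine ⟨⟨min (m - 1) ⌊u⌋₊, by omega⟩, ?_, ?_⟩
    · exact (Nat.cast_le.2 (min_le_right _ _)).trans (Nat.floor_le hu0)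
    · rcases le_total ⌊u⌋₊ (m - 1) with h | h
      · simpa [min_eq_right h] using (Nat.lt_floor_add_one u).le
      · simpa [min_eq_left h, Nat.cast_sub hm] using hum
  have key : y - (x - t + (2 * j + 1) * t / m) = 2 * (t / m) * (u - j - 1 / 2) := by
    simp only [u]; field_simp; ring
  have htm : 0 < t / m := by positivity
  refine ⟨j, mem_closedBall.2 (abs_le.2 ⟨?_, ?_⟩)⟩ <;> rw [key] <;> nlinarith

theorem exists_closedBall_subset_iUnion_closedBall_fin {ι : Type*} [Fintype ι] (x : ι → ℝ)
    {t : ℝ} (ht : 0 < t) {m : ℕ} (hm : 0 < m) :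
    ∃ c : (ι → Fin m) → ι → ℝ, closedBall x t ⊆ ⋃ j, closedBall (c j) (t / m) := by
  refine ⟨fun j i => x i - t + (2 * j i + 1) * t / m, fun y hy => ?_⟩
  rw [mem_closedBall, dist_pi_le_iff ht.le] at hy
  choose j hj using fun i => exists_fin_mem_closedBall ht (mem_closedBall.2 (hy i)) hm
  exact mem_iUnion.2 ⟨j, mem_closedBall.2 ((dist_pi_le_iff (by positivity)).2 fun i =>
    mem_closedBall.1 (hj i))⟩

section Product

variable {ι₀ ι₁ : Type*} [Fintype ι₀] [Fintype ι₁]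

theorem exists_closedBall_subset_iUnion_prod (x : (ι₀ → ℝ) × (ι₁ → ℝ)) {t : ℝ} (ht : 0 < t)
    {m : ℕ} (hm : 0 < m) :
    ∃ T : (ι₀ → Fin 2) × (ι₁ → Fin m) → Set ((ι₀ → ℝ) × (ι₁ → ℝ)),
      closedBall x t ⊆ ⋃ j, T j ∧
      ∀ j, ∀ z ∈ T j, T j ⊆ closedBall z.1 t ×ˢ closedBall z.2 (2 * t / m) := by
  obtain ⟨c₀, hc₀⟩ := exists_closedBall_subset_iUnion_closedBall_fin x.1 ht two_pos
  obtain ⟨c₁, hc₁⟩ := exists_closedBall_subset_iUnion_closedBall_fin x.2 ht hm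
  refine ⟨fun j => closedBall (c₀ j.1) (t / (2 : ℕ)) ×ˢ closedBall (c₁ j.2) (t / m), ?_, ?_⟩
  · intro y hy
    rw [← closedBall_prod_same] at hy
    obtain ⟨j₀, hj₀⟩ := mem_iUnion.1 (hc₀ hy.1)
    obtain ⟨j₁, hj₁⟩ := mem_iUnion.1 (hc₁ hy.2)
    exact mem_iUnion.2 ⟨(j₀, j₁), hj₀, hj₁⟩
  · rintro j z ⟨hz₀, hz₁⟩
    refine prod_mono (closedBall_subset_closedBall' ?_) (closedBall_subset_closedBall' ?_)
    · have := mem_closedBall'.1 hz₀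
      push_cast at this ⊢
      linarith
    · have := mem_closedBall'.1 hz₁
      rw [mul_div_assoc]
      linarith

open Fintype in
theorem exists_measure_closedBall_le_mul_measure_prod_closedBall
    (μ : Measure ((ι₀ → ℝ) × (ι₁ → ℝ))) [IsLocallyFiniteMeasure μ]
    {K : Set ((ι₀ → ℝ) × (ι₁ → ℝ))} (hK : MeasurableSet K) (hμK : 0 < μ K) {r₀ : ℝ}
    (hr₀ : 0 < r₀) {m : ℕ} (hm : 0 < m) :
    ∃ z ∈ K, ∃ t ∈ Ioc 0 r₀,
      μ (closedBall z (3 * t)) ≤ 2 ^ (2 * (card ι₀ + card ι₁) + card ι₀ + 2) * m ^ card ι₁ *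
        μ (closedBall z.1 t ×ˢ closedBall z.2 (2 * t / m)) ∧
      0 < μ (closedBall z.1 t ×ˢ closedBall z.2 (2 * t / m)) := by
  classical
  have hD : (4 : ℝ) ^ finrank ℝ ((ι₀ → ℝ) × (ι₁ → ℝ)) <
      ((2 ^ (2 * (card ι₀ + card ι₁) + 1) : ℝ≥0) : ℝ) := by
    rw [finrank_prod, finrank_fintype_fun_eq_card, finrank_fintype_fun_eq_card, pow_succ, pow_mul]
    norm_num
  obtain ⟨x, -, t, ⟨ht, htr⟩, hdbl, hpos, hdens⟩ :=
    exists_mem_doubling_density_point μ hK hμK (by norm_num) hD hr₀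
  obtain ⟨T, hcover, hT⟩ := exists_closedBall_subset_iUnion_prod x ht hm
  have : NeZero m := ⟨hm.ne'⟩
  obtain ⟨j, hj⟩ := exists_measure_le_card_mul_measure_inter μ (inter_subset_right.trans hcover)
  have hpig : μ (closedBall x t) ≤
      2 * (2 ^ card ι₀ * m ^ card ι₁ * μ (K ∩ closedBall x t ∩ T j)) := by
    refine hdens.trans (mul_le_mul_right (hj.trans_eq ?_) 2)
    simp
  have hKT : μ (K ∩ closedBall x t ∩ T j) ≠ 0 := fun h => by
    simp [h] at hpig
    simp [hpig] at hpos
  obtain ⟨z, ⟨hzK, hzx⟩, hzT⟩ := nonempty_of_measure_ne_zero hKT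
  have hzB : closedBall z (3 * t) ⊆ closedBall x (4 * t) :=
    closedBall_subset_closedBall' (by linarith [mem_closedBall.1 hzx])
  refine ⟨z, hzK, t, ⟨ht, htr⟩, ?_, pos_iff_ne_zero.2 fun h =>
    hKT (measure_mono_null (inter_subset_right.trans (hT j z hzT)) h)⟩
  calc μ (closedBall z (3 * t)) ≤ μ (closedBall x (4 * t)) := measure_mono hzB
    _ ≤ 2 ^ (2 * (card ι₀ + card ι₁) + 1) * μ (closedBall x t) := by simpa using hdbl
    _ ≤ 2 ^ (2 * (card ι₀ + card ι₁) + 1) *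
          (2 * (2 ^ card ι₀ * m ^ card ι₁ * μ (K ∩ closedBall x t ∩ T j))) :=
        mul_le_mul_right hpig _
    _ ≤ 2 ^ (2 * (card ι₀ + card ι₁) + 1) * (2 * (2 ^ card ι₀ * m ^ card ι₁ *
          μ (closedBall z.1 t ×ˢ closedBall z.2 (2 * t / m)))) := by
        gcongr
        exact inter_subset_right.trans (hT j z hzT)
    _ = _ := by ring

theorem setOf_abs_sub_le_eq_closedBall_prod (x : (ι₀ → ℝ) × (ι₁ → ℝ)) {p q : ℝ} (hp : 0 ≤ p)
    (hq : 0 ≤ q) :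
    {y : (ι₀ → ℝ) × (ι₁ → ℝ) | (∀ i, |x.1 i - y.1 i| ≤ p) ∧ (∀ i, |x.2 i - y.2 i| ≤ q)} =
      closedBall x.1 p ×ˢ closedBall x.2 q := by
  ext y
  simp only [mem_ofPred_eq, mem_prod, mem_closedBall', dist_pi_le_iff hp, dist_pi_le_iff hq,
    Real.dist_eq]

end Product

theorem preimage_smul_closedBall_smul {F : Type*} [NormedAddCommGroup F] [NormedSpace ℝ F]
    {a : ℝ} (ha : 0 < a) (x : F) (ρ : ℝ) :
    (a • ·) ⁻¹' closedBall (a • x) ρ = closedBall x (ρ / a) := by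
  ext y
  simp [dist_smul₀, abs_of_pos ha, le_div_iff₀' ha]

section Rescaling

variable {N₀ N₁ : ℕ} {L : ℝ}

noncomputable def rectScaling (hL : L ≠ 0) :
    ((Fin N₀ → ℝ) × (Fin N₁ → ℝ)) ≃ₜ ((Fin N₀ → ℝ) × (Fin N₁ → ℝ)) :=
  (Homeomorph.smulOfNeZero (2 / L ^ 2) (by positivity)).prodCongr
    (Homeomorph.smulOfNeZero (2⁻¹ : ℝ) (by norm_num))

theorem preimage_rectScaling_closedBall_prod (hL : L ≠ 0) (x : (Fin N₀ → ℝ) × (Fin N₁ → ℝ))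
    (p q : ℝ) :
    rectScaling hL ⁻¹' (closedBall (rectScaling hL x).1 p ×ˢ closedBall (rectScaling hL x).2 q) =
      closedBall x.1 (L ^ 2 * p / 2) ×ˢ closedBall x.2 (2 * q) := by
  have h₀ := preimage_smul_closedBall_smul (by positivity : 0 < 2 / L ^ 2) x.1 p
  have h₁ := preimage_smul_closedBall_smul (by norm_num : (0 : ℝ) < 2⁻¹) x.2 q
  rw [div_div_eq_mul_div, mul_comm] at h₀
  rw [div_inv_eq_mul, mul_comm] at h₁
  rw [← h₀, ← h₁]
  rfl

theorem preimage_rectScaling_closedBall (hL : L ≠ 0) (x : (Fin N₀ → ℝ) × (Fin N₁ → ℝ)) {r : ℝ}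
    (hr : 0 ≤ r) : rectScaling hL ⁻¹' closedBall (rectScaling hL x) r = Erect L x r := by
  rw [← closedBall_prod_same, preimage_rectScaling_closedBall_prod, Erect,
    setOf_abs_sub_le_eq_closedBall_prod x (by positivity) (by positivity)]

theorem closedBall_prod_subset_Score {σ : ℝ} (hL : 3 / 2 ≤ L) {m : ℕ} (hm : 2 ≤ 3 * σ * m)
    {t : ℝ} (ht : 0 < t) (x : (Fin N₀ → ℝ) × (Fin N₁ → ℝ)) :
    closedBall x.1 (L ^ 2 * t / 2) ×ˢ closedBall x.2 (2 * (2 * t / m)) ⊆ Score L σ x (3 * t) := by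
  have hm₀ : (0 : ℝ) < m := Nat.cast_pos.2 (Nat.pos_of_ne_zero fun h => by norm_num [h] at hm)
  rintro y ⟨hy₀, hy₁⟩
  refine ⟨fun i => ?_, fun i => ?_⟩
  · have := (dist_le_pi_dist x.1 y.1 i).trans (mem_closedBall'.1 hy₀)
    rw [Real.dist_eq] at this
    nlinarith [mul_nonneg (mul_nonneg ht.le (by linarith : 0 ≤ L)) (by linarith : 0 ≤ L - 3 / 2)]
  · have := (dist_le_pi_dist x.2 y.2 i).trans (mem_closedBall'.1 hy₁)
    rw [Real.dist_eq] at this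
    have : 2 * (2 * t / m) ≤ 2 * σ * (3 * t) := by
      rw [← mul_div_assoc, div_le_iff₀ hm₀]
      nlinarith
    linarith

end Rescaling

theorem exists_nat_two_le_three_mul_le_one {σ : ℝ} (hσ₀ : 0 < σ) (hσ₁ : σ < 1 / 2) :
    ∃ m : ℕ, 0 < m ∧ 2 ≤ 3 * σ * m ∧ σ * m ≤ 1 := by
  rcases le_or_gt σ (1 / 3) with h | h
  · have hfloor := Nat.sub_one_lt_floor σ⁻¹
    have hσσ : σ * σ⁻¹ = 1 := mul_inv_cancel₀ hσ₀.ne'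
    refine ⟨⌊σ⁻¹⌋₊, Nat.floor_pos.2 ?_, ?_, ?_⟩
    · rw [one_le_inv₀ hσ₀]; linarith
    · nlinarith
    · nlinarith [Nat.floor_le (inv_nonneg.2 hσ₀.le)]
  · exact ⟨2, two_pos, by push_cast; linarith, by push_cast; linarith⟩

theorem ofReal_mul_two_pow_mul_pow_le_one {σ : ℝ} (hσ : 0 ≤ σ) {m : ℕ} (hσm : σ * m ≤ 1)
    (k n : ℕ) :
    ENNReal.ofReal (σ ^ n * (1 / 3) * ((2 : ℝ) ^ (k + 1))⁻¹ * (1 + 1 / 6)⁻¹) *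
      (2 ^ (k + 2) * m ^ n) ≤ 1 := by
  have h2 : (2 : ℝ≥0∞) ^ (k + 2) * m ^ n = ENNReal.ofReal (2 ^ (k + 2) * m ^ n) := by
    rw [ENNReal.ofReal_mul (by positivity), ENNReal.ofReal_pow zero_le_two,
      ENNReal.ofReal_pow m.cast_nonneg, ENNReal.ofReal_natCast, ENNReal.ofReal_ofNat]
  rw [h2, ← ENNReal.ofReal_mul (by positivity), ENNReal.ofReal_le_one]
  have hpow : (σ * m) ^ n ≤ 1 := pow_le_one₀ (by positivity) hσm
  calc σ ^ n * (1 / 3) * ((2 : ℝ) ^ (k + 1))⁻¹ * (1 + 1 / 6)⁻¹ * (2 ^ (k + 2) * m ^ n)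
      = (σ * m) ^ n * (4 / 7) := by rw [mul_pow]; field_simp; ring
    _ ≤ 1 := by linarith

theorem stmt_5 (N₀ N₁ : ℕ)
    (μ : Measure ((Fin N₀ → ℝ) × (Fin N₁ → ℝ))) [IsLocallyFiniteMeasure μ]
    (K : Set ((Fin N₀ → ℝ) × (Fin N₁ → ℝ))) (hK : IsCompact K) (hμK : 0 < μ K)
    (r₀ L σ : ℝ) (hr₀ : 0 < r₀) (hL : 8 ≤ L) (hσ : σ ∈ Set.Ioo (0 : ℝ) (1 / 2)) :
    ∃ x ∈ K, ∃ r : ℝ, 0 < r ∧ r ≤ r₀ ∧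
      ENNReal.ofReal (σ ^ N₁ * (1 / 3) * ((2 : ℝ) ^ (2 * (N₀ + N₁) + N₀ + 1))⁻¹ * (1 + 1 / 6)⁻¹)
          * μ (Erect L x r) ≤ μ (Score L σ x r) ∧
      0 < μ (Score L σ x r) := by
  obtain ⟨m, hm, hm₃, hm₁⟩ := exists_nat_two_le_three_mul_le_one hσ.1 hσ.2
  have hL₀ : L ≠ 0 := by positivity
  set φ := rectScaling (N₀ := N₀) (N₁ := N₁) hL₀
  have : IsFiniteMeasureOnCompacts (μ.map φ) := Measure.IsFiniteMeasureOnCompacts.map μ φ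
  have hmap : ∀ s, μ.map φ s = μ (φ ⁻¹' s) := fun s => by
    rw [← φ.toMeasurableEquiv_coe, MeasurableEquiv.map_apply]
  obtain ⟨_, ⟨x, hxK, rfl⟩, t, ⟨ht, htr⟩, hle, hpos⟩ :=
    exists_measure_closedBall_le_mul_measure_prod_closedBall (μ.map φ)
      (hK.image φ.continuous).measurableSet (by rwa [hmap, φ.preimage_image])
      (div_pos hr₀ three_pos) hm
  simp only [Fintype.card_fin] at hle
  have hS : μ.map φ (closedBall (φ x).1 t ×ˢ closedBall (φ x).2 (2 * t / m)) ≤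
      μ (Score L σ x (3 * t)) := by
    rw [hmap, preimage_rectScaling_closedBall_prod]
    exact measure_mono (closedBall_prod_subset_Score (by linarith) hm₃ ht x)
  refine ⟨x, hxK, 3 * t, by positivity, by linarith [(le_div_iff₀' three_pos).1 htr], ?_,
    hpos.trans_le hS⟩
  rw [← preimage_rectScaling_closedBall hL₀ x (by positivity), ← hmap]
  refine (mul_le_mul_right hle _).trans (le_trans ?_ hS)
  rw [← mul_assoc]
  exact mul_le_of_le_one_left zero_le (ofReal_mul_two_pow_mul_pow_le_one hσ.1.le hm₁ _ _)
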